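/- arXiv:2601.11142 — 3 statements merged into one kernel-verified Lean document; each statement's English description precedes it below -/
import Mathlib

section
/- For every natural number k, (2k)! * (prod_{i=0}^{k-1} i!) = C_k * (prod_{i=0}^{k-1} (i+2)!), where C_k is the k-th Catalan number. (This expresses that the degree of the Grassmannian Gr(k,k+2) in its Plücker embedding, given by the formula (2k)! * prod_{i=0}^{k-1} i!/(2+i)!, equals the Catalan number C_k.) -/
lemma prod_shift (k : ℕ) :
    (∏ i ∈ Finset.range k, Nat.factorial (i + 2)) =
      Nat.factorial k * Nat.factorial (k + 1) * ∏ i ∈ Finset.range k, Nat.factorial i := by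
  induction k with
  | zero => simp
  | succ n ih =>
    rw [Finset.prod_range_succ, Finset.prod_range_succ, ih]
    simp [Nat.factorial_succ]
    ring

lemma two_k_fact (k : ℕ) :
    Nat.factorial (2 * k) = catalan k * (Nat.factorial k * Nat.factorial (k + 1)) := by
  have h := succ_mul_catalan_eq_centralBinom k
  have hc : Nat.centralBinom k * (Nat.factorial k * Nat.factorial k) = Nat.factorial (2 * k) := by
    have := Nat.choose_mul_factorial_mul_factorial (Nat.le_mul_of_pos_left k (by norm_num) : k ≤ 2 * k)
    simpa [Nat.centralBinom, two_mul, mul_assoc] using this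
  calc Nat.factorial (2 * k) = Nat.centralBinom k * (Nat.factorial k * Nat.factorial k) := hc.symm
    _ = (k + 1) * catalan k * (Nat.factorial k * Nat.factorial k) := by rw [h]
    _ = catalan k * (Nat.factorial k * Nat.factorial (k + 1)) := by
        rw [Nat.factorial_succ]; ring

/-- `(2k)! * ∏_{i=0}^{k-1} i! = C_k * ∏_{i=0}^{k-1} (i+2)!`, i.e. the degree of
the Grassmannian `Gr(k,k+2)` in its Plücker embedding,
`(2k)! * ∏_{i=0}^{k-1} i!/(2+i)!`, equals the `k`-th Catalan number `C_k`. -/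
theorem deg_grassmannian_k_kplus2_eq_catalan (k : ℕ) :
    Nat.factorial (2 * k) * (∏ i ∈ Finset.range k, Nat.factorial i) =
      catalan k * ∏ i ∈ Finset.range k, Nat.factorial (i + 2) := by
  rw [prod_shift, two_k_fact]
  ring
end

section
/- For all natural numbers k and n with k ≤ n, the product prod_{i=0}^{k-1} (n-k+i)! divides (k*(n-k))! * prod_{i=0}^{k-1} i!. (This expresses that the degree formula for the Grassmannian Gr(k,n) in its Plücker embedding, deg Gr(k,n) = (k(n-k))! * (0! * 1! * ... * (k-1)!) / ((n-k)! * (n-k+1)! * ... * (n-1)!), defines a natural number.) -/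
/-- Partial-block bound: for `r < q` and `k ≤ q`, `∑_{i<k} (r+i)/q ≤ k*r/q`. -/
lemma aux_partial_block (q r k : ℕ) (hq : 0 < q) (hr : r < q) (hk : k ≤ q) :
    (∑ i ∈ Finset.range k, (r + i) / q) ≤ k * r / q := by
  have hbound : ∀ i ∈ Finset.range k, (r + i) / q ≤ if q - r ≤ i then 1 else 0 := by
    intro i hi
    have hik : i < k := Finset.mem_range.mp hi
    by_cases h : q - r ≤ i
    · simp only [h, if_true]
      have h2 : r + i < 2 * q := by omega
      exact Nat.lt_succ_iff.mp ((Nat.div_lt_iff_lt_mul hq).mpr (by omega))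
    · simp only [h, if_false]
      exact Nat.le_of_eq (Nat.div_eq_of_lt (by omega))
  calc (∑ i ∈ Finset.range k, (r + i) / q)
      ≤ ∑ i ∈ Finset.range k, (if q - r ≤ i then 1 else 0) :=
        Finset.sum_le_sum hbound
    _ = ((Finset.range k).filter (fun i => q - r ≤ i)).card := by
        simp [Finset.sum_boole]
    _ ≤ (Finset.Ico (q - r) k).card := by
        apply Finset.card_le_card
        intro x hx
        simp only [Finset.mem_filter, Finset.mem_range] at hx
        simp [Finset.mem_Ico, hx.1, hx.2]
    _ = k - (q - r) := by rw [Nat.card_Ico]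
    _ ≤ k * r / q := by
        rcases Nat.le_total k (q - r) with h | h
        · simp [Nat.sub_eq_zero_of_le h]
        · rw [Nat.le_div_iff_mul_le hq]
          have h1 : k - (q - r) = k + r - q := by omega
          rw [h1]
          have h2 : (k + r - q) * q + (q - k) * (q - r) = k * r := by
            zify [hr.le, hk, show q ≤ k + r by omega]
            ring
          omega

/-- Full bound: for `r < q`, `∑_{i<k} (r + i % q)/q ≤ k*r/q`. -/
lemma aux_mod_sum (q r : ℕ) (hq : 0 < q) (hr : r < q) :
    ∀ k, (∑ i ∈ Finset.range k, (r + i % q) / q) ≤ k * r / q := by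
  intro k
  induction k using Nat.strong_induction_on with
  | _ k ih =>
    rcases Nat.lt_or_ge k q with hk | hk
    · calc (∑ i ∈ Finset.range k, (r + i % q) / q)
          = ∑ i ∈ Finset.range k, (r + i) / q := by
            apply Finset.sum_congr rfl
            intro i hi
            rw [Nat.mod_eq_of_lt (lt_trans (Finset.mem_range.mp hi) hk)]
        _ ≤ k * r / q := aux_partial_block q r k hq hr hk.le
    · -- k = q + (k - q)
      have hsplit : k = q + (k - q) := by omega
      have hlt : k - q < k := by omega
      calc (∑ i ∈ Finset.range k, (r + i % q) / q)
          = (∑ i ∈ Finset.range q, (r + i % q) / q)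
            + ∑ i ∈ Finset.range (k - q), (r + (q + i) % q) / q := by
            conv_lhs => rw [hsplit]
            rw [Finset.sum_range_add]
        _ = (∑ i ∈ Finset.range q, (r + i % q) / q)
            + ∑ i ∈ Finset.range (k - q), (r + i % q) / q := by
            congr 1
            apply Finset.sum_congr rfl
            intro i _
            rw [Nat.add_mod_left]
        _ ≤ q * r / q + (k - q) * r / q := by
            gcongr
            · calc (∑ i ∈ Finset.range q, (r + i % q) / q)
                  = ∑ i ∈ Finset.range q, (r + i) / q := by
                    apply Finset.sum_congr rfl
                    intro i hi
                    rw [Nat.mod_eq_of_lt (Finset.mem_range.mp hi)]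
                _ ≤ q * r / q := aux_partial_block q r q hq hr le_rfl
            · exact ih (k - q) hlt
        _ ≤ k * r / q := by
            rw [Nat.mul_div_cancel_left r hq]
            rw [Nat.le_div_iff_mul_le hq, Nat.add_mul]
            have := Nat.div_mul_le_self ((k - q) * r) q
            calc r * q + (k - q) * r / q * q ≤ r * q + (k - q) * r := by omega
              _ = k * r := by
                  have : q ≤ k := hk
                  zify [this]
                  ring

/-- Key division inequality: `∑_{i<k} (m+i)/q ≤ k*m/q + ∑_{i<k} i/q`. -/
lemma aux_div_sum (q m k : ℕ) (hq : 0 < q) :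
    (∑ i ∈ Finset.range k, (m + i) / q) ≤ k * m / q + ∑ i ∈ Finset.range k, i / q := by
  have hterm : ∀ i, (m + i) / q = m / q + i / q + (m % q + i % q) / q := by
    intro i
    conv_lhs => rw [← Nat.div_add_mod m q, ← Nat.div_add_mod i q]
    rw [show q * (m / q) + m % q + (q * (i / q) + i % q)
        = q * (m / q + i / q) + (m % q + i % q) by ring]
    rw [Nat.mul_add_div hq]
  simp only [hterm]
  rw [Finset.sum_add_distrib, Finset.sum_add_distrib, Finset.sum_const, Finset.card_range,
    smul_eq_mul]
  have h1 : (∑ i ∈ Finset.range k, (m % q + i % q) / q) ≤ k * (m % q) / q :=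
    aux_mod_sum q (m % q) hq (Nat.mod_lt m hq) k
  have h2 : k * (m / q) + k * (m % q) / q ≤ k * m / q := by
    conv_rhs => rw [← Nat.div_add_mod m q]
    rw [Nat.mul_add, ← Nat.mul_assoc, Nat.mul_comm k q, Nat.mul_assoc,
      Nat.mul_add_div hq]
  omega

/-- For `k ≤ n`, `∏_{i=0}^{k-1} (n-k+i)!` divides `(k(n-k))! * ∏_{i=0}^{k-1} i!`,
i.e. the degree formula for the Grassmannian `Gr(k,n)` in its Plücker embedding,
`deg Gr(k,n) = (k(n-k))! * (0! ⋯ (k-1)!) / ((n-k)! ⋯ (n-1)!)`, defines a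
natural number. -/
theorem deg_grassmannian_formula_is_nat (k n : ℕ) (hkn : k ≤ n) :
    (∏ i ∈ Finset.range k, Nat.factorial (n - k + i)) ∣
      Nat.factorial (k * (n - k)) * ∏ i ∈ Finset.range k, Nat.factorial i := by
  set m := n - k with hm
  have hL : (∏ i ∈ Finset.range k, Nat.factorial (m + i)) ≠ 0 :=
    Finset.prod_ne_zero_iff.mpr fun i _ => (Nat.factorial_pos _).ne'
  have hR : Nat.factorial (k * m) * ∏ i ∈ Finset.range k, Nat.factorial i ≠ 0 :=
    Nat.mul_ne_zero (Nat.factorial_pos _).ne'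
      (Finset.prod_ne_zero_iff.mpr fun i _ => (Nat.factorial_pos _).ne')
  rw [← Nat.factorization_le_iff_dvd hL hR, Finsupp.le_def]
  intro p
  by_cases hp : p.Prime
  case neg =>
    simp [Nat.factorization_eq_zero_of_not_prime _ hp]
  haveI : Fact p.Prime := ⟨hp⟩
  -- bound for Legendre's theorem
  set b := k * m + n + 1 with hb
  have hlog : ∀ x : ℕ, x ≤ k * m + n → Nat.log p x < b :=
    fun x hx => lt_of_le_of_lt (Nat.log_le_self p x) (by omega)
  have fact_eq : ∀ x : ℕ, x ≤ k * m + n →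
      (Nat.factorial x).factorization p = ∑ e ∈ Finset.Ico 1 b, x / p ^ e := by
    intro x hx
    rw [Nat.factorization_def _ hp]
    exact padicValNat_factorial (hlog x hx)
  have hprodL : (∏ i ∈ Finset.range k, Nat.factorial (m + i)).factorization p
      = ∑ i ∈ Finset.range k, ∑ e ∈ Finset.Ico 1 b, (m + i) / p ^ e := by
    rw [Nat.factorization_prod fun i _ => (Nat.factorial_pos _).ne']
    rw [Finset.sum_apply']
    apply Finset.sum_congr rfl
    intro i hi
    have hik : i < k := Finset.mem_range.mp hi
    exact fact_eq (m + i) (by omega)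
  have hprodR : (∏ i ∈ Finset.range k, Nat.factorial i).factorization p
      = ∑ i ∈ Finset.range k, ∑ e ∈ Finset.Ico 1 b, i / p ^ e := by
    rw [Nat.factorization_prod fun i _ => (Nat.factorial_pos _).ne']
    rw [Finset.sum_apply']
    apply Finset.sum_congr rfl
    intro i hi
    have hik : i < k := Finset.mem_range.mp hi
    exact fact_eq i (by omega)
  rw [Nat.factorization_mul (Nat.factorial_pos _).ne'
    (Finset.prod_ne_zero_iff.mpr fun i _ => (Nat.factorial_pos _).ne')]
  rw [Finsupp.add_apply, hprodL, hprodR, fact_eq (k * m) (by omega)]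
  rw [Finset.sum_comm (s := Finset.range k) (t := Finset.Ico 1 b),
    Finset.sum_comm (s := Finset.range k) (t := Finset.Ico 1 b), ← Finset.sum_add_distrib]
  apply Finset.sum_le_sum
  intro e _
  exact aux_div_sum (p ^ e) m k (Nat.pow_pos hp.pos)
end

section
/- Let S be the cubic polynomial S = 540u₀³ − 381u₀²u₁ + 19u₀u₁² + 58u₁³ − 402u₀²u₂ + 94u₀u₁u₂ + 27u₁²u₂ − 188u₀u₂² − 118u₁u₂² − 879u₀²u₃ + 84u₀u₁u₃ + 32u₁²u₃ − 106u₁u₂u₃ + 212u₀u₃² and let L₀ = 300u₀ − 900u₁ − 100u₂ − 691u₃, both in ℂ[u₀,u₁,u₂,u₃]. For every nonzero u ∈ ℂ⁴ with S(u) = 0 and L₀(u) = 0, the 2×4 matrix whose first row is the gradient of S at u and whose second row is (300, −900, −100, −691) has rank 2. (This expresses that the intersection of the Del Pezzo surface S with the hyperplane L₀ is a smooth curve; this curve is the genus-one component of the residual arrangement in the paper's positive geometry example.) -/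
open MvPolynomial

/-- The cubic polynomial defining the Del Pezzo surface `S ⊂ ℙ³` from the
paper's genus-one positive geometry example. -/
noncomputable def delPezzoCubic : MvPolynomial (Fin 4) ℂ :=
  540 * X 0 ^ 3 - 381 * X 0 ^ 2 * X 1 + 19 * X 0 * X 1 ^ 2 + 58 * X 1 ^ 3
    - 402 * X 0 ^ 2 * X 2 + 94 * X 0 * X 1 * X 2 + 27 * X 1 ^ 2 * X 2
    - 188 * X 0 * X 2 ^ 2 - 118 * X 1 * X 2 ^ 2 - 879 * X 0 ^ 2 * X 3
    + 84 * X 0 * X 1 * X 3 + 32 * X 1 ^ 2 * X 3 - 106 * X 1 * X 2 * X 3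
    + 212 * X 0 * X 3 ^ 2

/-- The linear form `L₀ = 300u₀ − 900u₁ − 100u₂ − 691u₃` from the paper's
genus-one positive geometry example. -/
noncomputable def linearFormL0 : MvPolynomial (Fin 4) ℂ :=
  300 * X 0 - 900 * X 1 - 100 * X 2 - 691 * X 3

lemma delPezzoCubic_eq : delPezzoCubic =
    C 540 * X 0 ^ 3 - C 381 * X 0 ^ 2 * X 1 + C 19 * X 0 * X 1 ^ 2 + C 58 * X 1 ^ 3
    - C 402 * X 0 ^ 2 * X 2 + C 94 * X 0 * X 1 * X 2 + C 27 * X 1 ^ 2 * X 2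
    - C 188 * X 0 * X 2 ^ 2 - C 118 * X 1 * X 2 ^ 2 - C 879 * X 0 ^ 2 * X 3
    + C 84 * X 0 * X 1 * X 3 + C 32 * X 1 ^ 2 * X 3 - C 106 * X 1 * X 2 * X 3
    + C 212 * X 0 * X 3 ^ 2 := by
  simp only [map_ofNat, delPezzoCubic]

lemma linearFormL0_eq : linearFormL0 =
    C 300 * X 0 - C 900 * X 1 - C 100 * X 2 - C 691 * X 3 := by
  simp only [map_ofNat, linearFormL0]

lemma linEval (u : Fin 4 → ℂ) :
    eval u linearFormL0 = 300 * u 0 - 900 * u 1 - 100 * u 2 - 691 * u 3 := by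
  simp [linearFormL0_eq]

lemma rank_two_of_det (A : Matrix (Fin 2) (Fin 4) ℂ) (j : Fin 4)
    (h : A 0 0 * A 1 j - A 0 j * A 1 0 ≠ 0) : A.rank = 2 := by
  classical
  set E : Matrix (Fin 4) (Fin 2) ℂ :=
    Matrix.of fun k l => if k = ![0, j] l then 1 else 0 with hE
  have hAE : A * E = Matrix.of ![![A 0 0, A 0 j], ![A 1 0, A 1 j]] := by
    ext i l
    have : (A * E) i l = ∑ k, A i k * if k = ![0, j] l then 1 else 0 := by
      simp [Matrix.mul_apply, hE]
    rw [this]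
    simp only [mul_ite, mul_one, mul_zero, Finset.sum_ite_eq' Finset.univ, Finset.mem_univ,
      if_true]
    fin_cases i <;> fin_cases l <;> simp
  have hdet : (Matrix.of ![![A 0 0, A 0 j], ![A 1 0, A 1 j]]).det ≠ 0 := by
    rw [Matrix.det_fin_two]
    simpa using h
  have h2 : (A * E).rank = 2 := by
    rw [hAE]
    have := Matrix.rank_of_isUnit (Matrix.of ![![A 0 0, A 0 j], ![A 1 0, A 1 j]])
      ((Matrix.isUnit_iff_isUnit_det _).mpr (isUnit_iff_ne_zero.mpr hdet))
    simpa using this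
  refine le_antisymm (A.rank_le_card_height.trans (by simp)) ?_
  calc (2 : ℕ) = (A * E).rank := h2.symm
    _ ≤ A.rank := Matrix.rank_mul_le_left A E

lemma delPezzo_key (a b c d : ℂ)
    (hS2 : 540 * a^3 - 381 * a^2*b - 402 * a^2*c - 879 * a^2*d + 19 * a*b^2 + 94 * a*b*c + 84 * a*b*d - 188 * a*c^2 + 212 * a*d^2 + 58 * b^3 + 27 * b^2*c + 32 * b^2*d - 118 * b*c^2 - 106 * b*c*d = 0)
    (hL2 : 300 * a - 900 * b - 100 * c - 691 * d = 0)
    (hm01 : (-900) * (1620 * a^2 - 762 * a*b - 804 * a*c - 1758 * a*d + 19 * b^2 + 94 * b*c + 84 * b*d - 188 * c^2 + 212 * d^2) - 300 * (-381 * a^2 + 38 * a*b + 94 * a*c + 84 * a*d + 174 * b^2 + 54 * b*c + 64 * b*d - 118 * c^2 - 106 * c*d) = 0)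
    (hm02 : (-100) * (1620 * a^2 - 762 * a*b - 804 * a*c - 1758 * a*d + 19 * b^2 + 94 * b*c + 84 * b*d - 188 * c^2 + 212 * d^2) - 300 * (-402 * a^2 + 94 * a*b - 376 * a*c + 27 * b^2 - 236 * b*c - 106 * b*d) = 0)
    (hm03 : (-691) * (1620 * a^2 - 762 * a*b - 804 * a*c - 1758 * a*d + 19 * b^2 + 94 * b*c + 84 * b*d - 188 * c^2 + 212 * d^2) - 300 * (-879 * a^2 + 84 * a*b + 424 * a*d + 32 * b^2 - 106 * b*c) = 0) :
    a = 0 ∧ b = 0 ∧ c = 0 ∧ d = 0 := by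
  have ha : a ^ 4 = 0 := by
    linear_combination ((-8928747506792834819513834820068739729419432559200496600544970 : ℂ)/245674678000178614496510284383317224124891766012450673925409813) * a^3 * hL2 +
      ((-408828077834314706598962232984602667027948647278314904463084866 : ℂ)/18425600850013396087238271328748791809366882450933800544405735975) * a^2*b * hL2 +
      ((-3973759501002019332407417460811472053742786190732974441521354 : ℂ)/347652846226667850702608892995260222818243065111958500837844075) * a^2*c * hL2 +
      ((6861109136040158094454010745498386247345682528774000015374772 : ℂ)/347652846226667850702608892995260222818243065111958500837844075) * a^2*d * hL2 +
      ((-2693266209064824080034179282222856401167832114645110427459267 : ℂ)/142834115116382915404947839757742572165634747681657368561284775) * a*b^2 * hL2 +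
      ((-1234589335843680448280272290163646009952475015850083181272639 : ℂ)/347652846226667850702608892995260222818243065111958500837844075) * a*b*c * hL2 +
      ((110583197836772444045111240696334118104688109860185124320434 : ℂ)/38628094025185316744734321443917802535360340567995388981982675) * a*b*d * hL2 +
      ((344661852866041153832367168416390974645312480507282137716884 : ℂ)/38628094025185316744734321443917802535360340567995388981982675) * a*c^2 * hL2 +
      ((459977095206592681088167629776158764333618857324483205127748 : ℂ)/38628094025185316744734321443917802535360340567995388981982675) * a*c*d * hL2 +
      ((-11254585998920317842442151925536096647936410376738918461785248 : ℂ)/3685120170002679217447654265749758361873376490186760108881147195) * b^3 * hL2 +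
      ((78319061220711221363086433292341223174103587743007936252832 : ℂ)/23176856415111190046840592866350681521216204340797233389189605) * b^2*c * hL2 +
      ((401294403161355229110127375745135422147327135740073375912156 : ℂ)/69530569245333570140521778599052044563648613022391700167568815) * b^2*d * hL2 +
      ((-529753197815801344982764389988198213814059008416534209234 : ℂ)/7725618805037063348946864288783560507072068113599077796396535) * b*c^2 * hL2 +
      ((-706995378459896071986818307126139234893737403376079010698 : ℂ)/7725618805037063348946864288783560507072068113599077796396535) * b*c*d * hL2 +
      ((410255394930759932734547979581868184552188064749577972109328149 : ℂ)/921280042500669804361913566437439590468344122546690027220286798750) * a^2 * hm01 +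
      ((28866117636801022568906686021609079906711212097415278011098538 : ℂ)/1381920063751004706542870349656159385702516183820035040830430198125) * a*b * hm01 +
      ((23679920820924475450581873029445169992772734146915023139595137 : ℂ)/102364449166741089373545951826382176718704902505187780802254088750) * a*c * hm01 +
      ((154154304550838625298980138494686159187093815106478188633296339 : ℂ)/2211072102001607530468592559449855017124025894112056065328688317000) * b^2 * hm01 +
      ((-72793166256118056096962004032409814872481419192238839941749 : ℂ)/40945779666696435749418380730552870687481961002075112320901635500) * b*c * hm01 +
      ((1532784152335932448055359647786249519842818311948070365888075517 : ℂ)/3685120170002679217447654265749758361873376490186760108881147195000) * a^2 * hm02 +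
      ((1947554494043760590061691738381078121107074601369251876304144033 : ℂ)/11055360510008037652342962797249275085620129470560280326643441585000) * a*b * hm02 +
      ((54882266741510973649591773344910357609572094938578505205451163 : ℂ)/204728898333482178747091903652764353437409805010375561604508177500) * a*c * hm02 +
      ((932233781318539967904579469997313442142273301989854454638699 : ℂ)/10429585386800035521078266789857806684547291953358755025135322250) * b^2 * hm02 +
      ((1554543895868019102616761797695457773360451818326734417147641 : ℂ)/81891559333392871498836761461105741374963922004150224641803271000) * b*c * hm02 +
      ((-9007473022838960274063168174290012837520271083755086525391159 : ℂ)/12283733900008930724825514219165861206244588300622533696270490650) * a^2 * hm03 +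
      ((-3659544374033115744788562475233491096331306009561424620351959 : ℂ)/55276802550040188261714813986246375428100647352801401633217207925) * a*b * hm03 +
      ((-811261772380738664859690949231193696118833527041755999137456 : ℂ)/2047288983334821787470919036527643534374098050103755616045081775) * a*c * hm03 +
      ((-4190667170994914553373305155705543775508786427469865599293 : ℂ)/31998149088301122003887012437769247715253630884400232493902870) * b^2 * hm03
  have hb : b ^ 4 = 0 := by
    linear_combination ((-5407581060158557267566207305410923861123700547507836892022496 : ℂ)/15165103580257939166451252122426989143511837408175967526259865) * a^3 * hL2 +
      ((-68322347452882780090491474818463325862840519339137735083729196 : ℂ)/227476553703869087496768781836404837152677561122639512893897975) * a^2*b * hL2 +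
      ((-437423861415898935042380245229430661321628167695459095086504 : ℂ)/4292010447242812971637146827101978059484482285332820997998075) * a^2*c * hL2 +
      ((896611923717333742803634343382353315975761015503294432981952 : ℂ)/4292010447242812971637146827101978059484482285332820997998075) * a^2*d * hL2 +
      ((-1262582078567501932396586650627774298179658353925937643231676 : ℂ)/5290152411717885755738808879916391561690175840061384020788325) * a*b^2 * hL2 +
      ((-29116320677411401739816831939040063054385964841482194523228 : ℂ)/1430670149080937657212382275700659353161494095110940332666025) * a*b*c * hL2 +
      ((231803567087283322229056159812475617539320911726740939710376 : ℂ)/4292010447242812971637146827101978059484482285332820997998075) * a*b*d * hL2 +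
      ((42912152853324878655006508612394017791894598626183013076464 : ℂ)/476890049693645885737460758566886451053831365036980110888675) * a*c^2 * hL2 +
      ((57269486757518911879234896864695165634221677340259822057008 : ℂ)/476890049693645885737460758566886451053831365036980110888675) * a*c*d * hL2 +
      ((-549543954430426887348872919095773650659604267756973499417614 : ℂ)/15165103580257939166451252122426989143511837408175967526259865) * b^3 * hL2 +
      ((3755071551801813423231187670351609934132949094534078750104 : ℂ)/95378009938729177147492151713377290210766273007396022177735) * b^2*c * hL2 +
      ((19391745213652907994571326740413888400346062277896105734936 : ℂ)/286134029816187531442476455140131870632298819022188066533205) * b^2*d * hL2 +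
      ((-78940337392578251280827767548520742508021364543862017176 : ℂ)/95378009938729177147492151713377290210766273007396022177735) * b*c^2 * hL2 +
      ((-105351801444006396308073901763874109794822958912075926072 : ℂ)/95378009938729177147492151713377290210766273007396022177735) * b*c*d * hL2 +
      ((27508843326230084618371055222822707740472159974816193814956672 : ℂ)/5686913842596727187419219545910120928816939028065987822347449375) * a^2 * hm01 +
      ((10835045555167059979737557513904908203348763392167474869392018 : ℂ)/17060741527790181562257658637730362786450817084197963467042348125) * a*b * hm01 +
      ((1474135262391640930772207797401407619067555641029935176730726 : ℂ)/631879315844080798602135505101124547646326558673998646927494375) * a*c * hm01 +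
      ((1830701074863116470613605985420991897940420312770128686830889 : ℂ)/2274765537038690874967687818364048371526775611226395128938979750) * b^2 * hm01 +
      ((-2711789720111342136077474064683968502188544116292343603159 : ℂ)/126375863168816159720427101020224909529265311734799729385498875) * b*c * hm01 +
      ((25679208660301583519261970154503850626883348050556149506250944 : ℂ)/5686913842596727187419219545910120928816939028065987822347449375) * a^2 * hm02 +
      ((40972898615258341440569596292385787440148371409323880652011181 : ℂ)/17060741527790181562257658637730362786450817084197963467042348125) * a*b * hm02 +
      ((1680975066705032631297600270771538722200291503617469092415907 : ℂ)/631879315844080798602135505101124547646326558673998646927494375) * a*c * hm02 +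
      ((88677019752043483893253496302296887228492828756782064267279 : ℂ)/85840208944856259432742936542039561189689645706656419959961500) * b^2 * hm02 +
      ((57911976811730210930504416429166059272921627169292742971331 : ℂ)/252751726337632319440854202040449819058530623469599458770997750) * b*c * hm02 +
      ((-601989823544456721856118524582216312831328445115196183628112 : ℂ)/75825517901289695832256260612134945717559187040879837631299325) * a^2 * hm03 +
      ((-975521610839409705901648061494841293590306845524903198134674 : ℂ)/682429661111607262490306345509214511458032683367918538681693925) * a*b * hm03 +
      ((-100848152750044277945192055315358782979080989655683685951256 : ℂ)/25275172633763231944085420204044981905853062346959945877099775) * a*c * hm03 +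
      ((-99904024142049674616527009713096619236193759185164273691 : ℂ)/65839812938891197538862165509813266903814055317695951633545) * b^2 * hm03
  have hc : c ^ 4 = 0 := by
    linear_combination ((-12595193883210720482114914270518977563892410118056337594342678422609333 : ℂ)/574800330848320470910765996821841415344064428890799892917102080488837595) * a^3 * hL2 +
      ((163259188007356918897514074827825767935943666537089597753466722500995353229 : ℂ)/17244009925449614127322979904655242460321932866723996787513062414665127850) * a^2*b * hL2 +
      ((-548246001127036290848352855693153530971840661110106458477284429727500002 : ℂ)/162679338919335982333235659477879645852093706289849026297293041647784225) * a^2*c * hL2 +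
      ((-70821323353543726670100362528333367204666363419920499179521161541976508 : ℂ)/54226446306445327444411886492626548617364568763283008765764347215928075) * a^2*d * hL2 +
      ((4762453698141079406204946282734540775207413378686546559830440988340401973 : ℂ)/802046973276726238480138600216522905131252691475534734302933135565819900) * a*b^2 * hL2 +
      ((-1449567632906535463740302108510262903424189200524339123691925619505194543 : ℂ)/650717355677343929332942637911518583408374825159396105189172166591136900) * a*b*c * hL2 +
      ((-1021710912872918098507571930221140953339157244661847454084177112498645099 : ℂ)/325358677838671964666471318955759291704187412579698052594586083295568450) * a*b*d * hL2 +
      ((10519052493809082748981888901280236645523630666715998296443094634110957 : ℂ)/18075482102148442481470628830875516205788189587761002921921449071976025) * a*c^2 * hL2 +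
      ((13869296215419321402551985838180279369627159408345083036107828839097479 : ℂ)/18075482102148442481470628830875516205788189587761002921921449071976025) * a*c*d * hL2 +
      ((2142237373310247667847019467530697800066016947980440179910265795985435003 : ℂ)/3448801985089922825464595980931048492064386573344799357502612482933025570) * b^3 * hL2 +
      ((-14823791533210172411402026306483007623198526912143811607957198350345533 : ℂ)/21690578522578130977764754597050619446945827505313203506305738886371230) * b^2*c * hL2 +
      ((-38102345523150877888592722816296748034034281337476367703584825572774366 : ℂ)/32535867783867196466647131895575929170418741257969805259458608329556845) * b^2*d * hL2 +
      ((110721448308139533197340430602196160476902170988040227064036091961979 : ℂ)/7230192840859376992588251532350206482315275835104401168768579628790410) * b*c^2 * hL2 +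
      ((122071086790017113473673722250334228483350958444228325905308160651803 : ℂ)/7230192840859376992588251532350206482315275835104401168768579628790410) * b*c*d * hL2 +
      ((68423 : ℂ)/155978721) * c^3 * hL2 +
      ((-73246 : ℂ)/51992907) * c^2*d * hL2 +
      ((-135005358717235186907228458544402748419798382251136381961573563638194443199 : ℂ)/3448801985089922825464595980931048492064386573344799357502612482933025570000) * a^2 * hm01 +
      ((-137865365774493195517914485324850727660232434587330180283683599287152758339 : ℂ)/2586601488817442119098446985698286369048289930008599518126959362199769177500) * a*b * hm01 +
      ((354985258336566845280041678276341553788465841200750618162784255918967263 : ℂ)/23950013785346686287948583200910058972669351203783328871545920020368233125) * a*c * hm01 +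
      ((-58691034239866387575217371151623566250825088302975206208998308856406352919 : ℂ)/4138562382107907390557515177117258190477263888013759229003134979519630684000) * b^2 * hm01 +
      ((27681847078552558367996520282118651867374248110354025814810854884229123 : ℂ)/76640044113109396121435466242912188712541923852106652388946944065178346000) * b*c * hm01 +
      ((477481 : ℂ)/93587232600) * c^2 * hm01 +
      ((-308936042845919921980125431526431101278576020090906925503422889623519886071 : ℂ)/6897603970179845650929191961862096984128773146689598715005224965866051140000) * a^2 * hm02 +
      ((-1442905011134253249192103611562979050465752111906901189894358992587357843079 : ℂ)/20692811910539536952787575885586290952386319440068796145015674897598153420000) * a*b * hm02 +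
      ((230176641703502358687063379538127987589052809137034153209212623793355281537 : ℂ)/10346405955269768476393787942793145476193159720034398072507837448799076710000) * a*c * hm02 +
      ((-707699542191594886155284884821078825621470711431870939998053694747662131 : ℂ)/39043041340640635759976558274691115004502489509563766311350329995468214000) * b^2 * hm02 +
      ((-582624368385847876034245907153116685494731978271334237867163326926520087 : ℂ)/153280088226218792242870932485824377425083847704213304777893888130356692000) * b*c * hm02 +
      ((253234283840742426249574992646711475532204784890116371414533942599 : ℂ)/3979929783602893554843466607009739030823246609401700917591638970600) * a^2 * hm03 +
      ((563107732467414567927186275582700830803571394865677931959588834283 : ℂ)/5969894675404340332265199910514608546234869914102551376387458455900) * a*b * hm03 +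
      ((-39018989522848996071648989393446135914414915050514035002054504474 : ℂ)/1492473668851085083066299977628652136558717478525637844096864613975) * a*c * hm03 +
      ((91986539376340592152816637811207551951965630360718961672465737 : ℂ)/3455800101536521176419797343279078753247392135515225109341509960) * b^2 * hm03
  have hd : d ^ 4 = 0 := by
    linear_combination ((-4366053831573513697326519310849115199742923258079840690673542679441000000 : ℂ)/1847381528447392769299252575832057758152318699365315004677755988919938503) * a^3 * hL2 +
      ((3703678730904811832548473501339098499052305695055694502587853309593000000 : ℂ)/5542144585342178307897757727496173274456956098095945014033267966759815509) * a^2*b * hL2 +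
      ((-169539742388066643618948842913308236713690541429981463579716543205000000 : ℂ)/104568765761173175620712409952757986310508605624451792717608829561505953) * a^2*c * hL2 +
      ((35412479586292603613207985767783753038553975184418193257142784404710000 : ℂ)/34856255253724391873570803317585995436836201874817264239202943187168651) * a^2*d * hL2 +
      ((297864048635032529449458259792920677687451394236138322795094312282000000 : ℂ)/5542144585342178307897757727496173274456956098095945014033267966759815509) * a*b^2 * hL2 +
      ((-79584598473752887388610396580008723594436106476211028679503455897000000 : ℂ)/104568765761173175620712409952757986310508605624451792717608829561505953) * a*b*c * hL2 +
      ((-54211614716789428110780579486607587721063092000516670478435914762780000 : ℂ)/104568765761173175620712409952757986310508605624451792717608829561505953) * a*b*d * hL2 +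
      ((8817120616185101116425681188113944933041106345596801696517152243000000 : ℂ)/11618751751241463957856934439195331812278733958272421413067647729056217) * a*c^2 * hL2 +
      ((11769908083426394234811843798695314892511682333850389884100728005620000 : ℂ)/11618751751241463957856934439195331812278733958272421413067647729056217) * a*c*d * hL2 +
      ((-300 : ℂ)/477481) * a*d^2 * hL2 +
      ((-365194561711925750301121027683053848158730326437880200007100631789000000 : ℂ)/5542144585342178307897757727496173274456956098095945014033267966759815509) * b^3 * hL2 +
      ((2649301784433171306371736736972912902646731584428756315663210103000000 : ℂ)/34856255253724391873570803317585995436836201874817264239202943187168651) * b^2*c * hL2 +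
      ((13315377272992914972025813757225536615559781234618773110626037095170000 : ℂ)/104568765761173175620712409952757986310508605624451792717608829561505953) * b^2*d * hL2 +
      ((-17644168606993533568503809767793461634266764619670994032230751000000 : ℂ)/11618751751241463957856934439195331812278733958272421413067647729056217) * b*c^2 * hL2 +
      ((-32106451127271089699227129994914904306485870063649063316302750860000 : ℂ)/11618751751241463957856934439195331812278733958272421413067647729056217) * b*c*d * hL2 +
      ((900 : ℂ)/477481) * b*d^2 * hL2 +
      ((341000000 : ℂ)/74476875681801) * c^3 * hL2 +
      ((-767770000 : ℂ)/24825625227267) * c^2*d * hL2 +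
      ((100 : ℂ)/477481) * c*d^2 * hL2 +
      ((-1 : ℂ)/691) * d^3 * hL2 +
      ((116633354082869494022403687871660082356005756409009815562655805499970000 : ℂ)/5542144585342178307897757727496173274456956098095945014033267966759815509) * a^2 * hm01 +
      ((-177162466130210251370430413129512405472677980101549868088558055385320000 : ℂ)/16626433756026534923693273182488519823370868294287835042099803900279446527) * a*b * hm01 +
      ((12116147448525507115282872085735189447699688688698749505463726727760000 : ℂ)/615793842815797589766417525277352586050772899788438334892585329639979501) * a*c * hm01 +
      ((25137686054412098017856736306584137330559007173194723740116588597425000 : ℂ)/16626433756026534923693273182488519823370868294287835042099803900279446527) * b^2 * hm01 +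
      ((-26206159107261681624629313465316578862535782336168246107408197450000 : ℂ)/615793842815797589766417525277352586050772899788438334892585329639979501) * b*c * hm01 +
      ((500000 : ℂ)/223430627045403) * c^2 * hm01 +
      ((139095601468438184800520443713054209594756956934708607949444547215000 : ℂ)/8020469732767262384801386002165229051312526914755347343029331355658199) * a^2 * hm02 +
      ((-85201343624069475440568888361518712836063646435680772402230788465000 : ℂ)/24061409198301787154404158006495687153937580744266042029087994066974597) * a*b * hm02 +
      ((575297549506661176298181943217336755536617981838075772128781075790000 : ℂ)/24061409198301787154404158006495687153937580744266042029087994066974597) * a*c * hm02 +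
      ((893166423707147469741440666023564529789432797514542607174224150000 : ℂ)/453988852798146927441587886915012965168633598948415887341282906924049) * b^2 * hm02 +
      ((405744257017227073994361190221827667316352035667338463917124275000 : ℂ)/891163303640806931644598444685025450145836323861705260336592372850911) * b*c * hm02 +
      ((-16064727705920423745290780561597336605595551699891377933500000 : ℂ)/462782532977080645912031000815085933816656582488569874138562671) * a^2 * hm03 +
      ((23385211282173841112694536346065095104917788268942754361000000 : ℂ)/1388347598931241937736093002445257801449969747465709622415688013) * a*b * hm03 +
      ((-47015538844998454190054727645180582122509571080063667632000000 : ℂ)/1388347598931241937736093002445257801449969747465709622415688013) * a*c * hm03 +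
      ((-5758608760200407453242738145450990612655776717212052500000 : ℂ)/2009186105544489056058021711208766717004297753206526226361343) * b^2 * hm03
  exact ⟨pow_eq_zero_iff (by norm_num) |>.mp ha, pow_eq_zero_iff (by norm_num) |>.mp hb,
    pow_eq_zero_iff (by norm_num) |>.mp hc, pow_eq_zero_iff (by norm_num) |>.mp hd⟩

lemma gradEval (u : Fin 4 → ℂ) :
    (eval u (pderiv 0 delPezzoCubic) = 1620 * (u 0)^2 - 762 * (u 0)*(u 1) - 804 * (u 0)*(u 2) - 1758 * (u 0)*(u 3) + 19 * (u 1)^2 + 94 * (u 1)*(u 2) + 84 * (u 1)*(u 3) - 188 * (u 2)^2 + 212 * (u 3)^2) ∧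
    (eval u (pderiv 1 delPezzoCubic) = -381 * (u 0)^2 + 38 * (u 0)*(u 1) + 94 * (u 0)*(u 2) + 84 * (u 0)*(u 3) + 174 * (u 1)^2 + 54 * (u 1)*(u 2) + 64 * (u 1)*(u 3) - 118 * (u 2)^2 - 106 * (u 2)*(u 3)) ∧
    (eval u (pderiv 2 delPezzoCubic) = -402 * (u 0)^2 + 94 * (u 0)*(u 1) - 376 * (u 0)*(u 2) + 27 * (u 1)^2 - 236 * (u 1)*(u 2) - 106 * (u 1)*(u 3)) ∧
    (eval u (pderiv 3 delPezzoCubic) = -879 * (u 0)^2 + 84 * (u 0)*(u 1) + 424 * (u 0)*(u 3) + 32 * (u 1)^2 - 106 * (u 1)*(u 2)) := by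
  refine ⟨?_, ?_, ?_, ?_⟩ <;>
    (simp [delPezzoCubic_eq, pderiv_mul, pderiv_pow, pderiv_C, pderiv_X, Pi.single_apply]; ring)

lemma cubicEval (u : Fin 4 → ℂ) :
    eval u delPezzoCubic = 540 * (u 0)^3 - 381 * (u 0)^2*(u 1) - 402 * (u 0)^2*(u 2) - 879 * (u 0)^2*(u 3) + 19 * (u 0)*(u 1)^2 + 94 * (u 0)*(u 1)*(u 2) + 84 * (u 0)*(u 1)*(u 3) - 188 * (u 0)*(u 2)^2 + 212 * (u 0)*(u 3)^2 + 58 * (u 1)^3 + 27 * (u 1)^2*(u 2) + 32 * (u 1)^2*(u 3) - 118 * (u 1)*(u 2)^2 - 106 * (u 1)*(u 2)*(u 3) := by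
  simp [delPezzoCubic_eq]; ring


/-- For every nonzero `u ∈ ℂ⁴` with `S(u) = 0` and `L₀(u) = 0`, the `2 × 4`
matrix whose first row is the gradient of `S` at `u` and whose second row is
`(300, −900, −100, −691)` has rank `2`. This expresses that the intersection
of the Del Pezzo surface `S` with the hyperplane `L₀` is a smooth curve, the
genus-one component of the residual arrangement in the paper's example. -/
theorem delPezzoCubic_inter_hyperplane_smooth (u : Fin 4 → ℂ) (hu : u ≠ 0)
    (hS : MvPolynomial.eval u delPezzoCubic = 0)
    (hL : MvPolynomial.eval u linearFormL0 = 0) :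
    (Matrix.of
        ![fun j : Fin 4 => MvPolynomial.eval u (MvPolynomial.pderiv j delPezzoCubic),
          ![300, -900, -100, -691]]).rank = 2 := by
  obtain ⟨hG0, hG1, hG2, hG3⟩ := gradEval u
  have hS2 := (cubicEval u) ▸ hS
  have hL2 := (linEval u) ▸ hL
  set A : Matrix (Fin 2) (Fin 4) ℂ := Matrix.of
    ![fun j : Fin 4 => MvPolynomial.eval u (MvPolynomial.pderiv j delPezzoCubic),
      ![300, -900, -100, -691]] with hA
  have hA0 : ∀ j : Fin 4, A 0 j = MvPolynomial.eval u (MvPolynomial.pderiv j delPezzoCubic) := by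
    intro j; simp [hA]
  have hA10 : A 1 0 = 300 := by simp [hA]
  have hA11 : A 1 1 = -900 := by simp [hA]
  have hA12 : A 1 2 = -100 := by simp [hA]
  have hA13 : A 1 3 = -691 := by simp [hA]
  by_cases h1 : A 0 0 * A 1 1 - A 0 1 * A 1 0 = 0
  · by_cases h2 : A 0 0 * A 1 2 - A 0 2 * A 1 0 = 0
    · by_cases h3 : A 0 0 * A 1 3 - A 0 3 * A 1 0 = 0
      · exfalso
        rw [hA0, hA0, hA10, hA11, hG0, hG1] at h1
        rw [hA0, hA0, hA10, hA12, hG0, hG2] at h2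
        rw [hA0, hA0, hA10, hA13, hG0, hG3] at h3
        obtain ⟨e0, e1, e2, e3⟩ := delPezzo_key (u 0) (u 1) (u 2) (u 3) hS2 hL2
          (by linear_combination h1) (by linear_combination h2) (by linear_combination h3)
        apply hu
        funext i
        fin_cases i
        · exact e0
        · exact e1
        · exact e2
        · exact e3
      · exact rank_two_of_det A 3 h3
    · exact rank_two_of_det A 2 h2
  · exact rank_two_of_det A 1 h1
end
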